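/- arXiv:1502.01955 — 2 statements merged into one kernel-verified Lean document; each statement's English description precedes it below -/
import Mathlib

section
/- Holm's stepdown procedure with critical constants αᵢ = α/i controls the familywise error rate: if p-values p₁,...,p_L are tested by ordering them increasingly and rejecting sequentially while p_(j) ≤ α/(L−j+1), then the probability of rejecting at least one true null hypothesis is at most α, provided each true null p-value is stochastically no smaller than uniform on [0,1]. -/
open MeasureTheory

/-- Holm's stepdown procedure controls the familywise error rate at level `α`:
order the p-values increasingly via `Tuple.sort`; the hypothesis with the `j`-th
smallest p-value (0-indexed) is rejected when every p-value of rank `l ≤ j`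
satisfies `p_(l) ≤ α/(L−l)` (i.e. `α/(L−l+1)` in 1-indexed form).  If each true
null p-value is stochastically no smaller than uniform on `[0,1]`, then the
probability of rejecting at least one true null is at most `α`. -/
theorem holm_fwer_control
    {Ω : Type*} [MeasurableSpace Ω] (μ : Measure Ω) [IsProbabilityMeasure μ]
    (L : ℕ) (hL : 0 < L) (α : ℝ) (hα : α ∈ Set.Ioo (0 : ℝ) 1)
    (p : Fin L → Ω → ℝ) (hmeas : ∀ i, Measurable (p i))
    (T : Set (Fin L))
    (htrue : ∀ i ∈ T, ∀ u ∈ Set.Icc (0 : ℝ) 1,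
      μ {ω | p i ω ≤ u} ≤ ENNReal.ofReal u)
    (reject : Fin L → Ω → Prop)
    (hreject : ∀ i ω, reject i ω ↔
      ∃ j : Fin L, Tuple.sort (fun k => p k ω) j = i ∧
        ∀ l : Fin L, l ≤ j →
          p (Tuple.sort (fun k => p k ω) l) ω ≤ α / ((L : ℝ) - (l : ℕ))) :
    μ {ω | ∃ i ∈ T, reject i ω} ≤ ENNReal.ofReal α := by
  classical
  set Tfin : Finset (Fin L) := (Set.toFinite T).toFinset with hTfin
  have hmemT : ∀ i, i ∈ Tfin ↔ i ∈ T := fun i => (Set.toFinite T).mem_toFinset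
  rcases Tfin.eq_empty_or_nonempty with hTe | hTne
  · have hempty : {ω | ∃ i ∈ T, reject i ω} = ∅ := by
      ext ω
      simp only [Set.mem_setOf_eq, Set.mem_empty_iff_false, iff_false, not_exists]
      rintro i ⟨hi, -⟩
      have : i ∈ Tfin := (hmemT i).mpr hi
      simp [hTe] at this
    rw [hempty]
    simp [ENNReal.ofReal_pos.mpr hα.1]
  · set t := Tfin.card with ht
    have htpos : 0 < t := Finset.card_pos.mpr hTne
    have htR : (0 : ℝ) < t := by exact_mod_cast htpos
    have hαt0 : 0 ≤ α / t := div_nonneg hα.1.le htR.le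
    have hαt1 : α / t ≤ 1 := by
      have h1 : α / t ≤ α / 1 := by
        apply div_le_div_of_nonneg_left hα.1.le one_pos
        exact_mod_cast htpos
      simpa using h1.trans (by linarith [hα.2])
    have hsub : {ω | ∃ i ∈ T, reject i ω} ⊆ ⋃ i ∈ Tfin, {ω | p i ω ≤ α / t} := by
      intro ω hω
      obtain ⟨i, hiT, hrej⟩ := hω
      obtain ⟨j, hσj, hall⟩ := (hreject i ω).mp hrej
      set σ := Tuple.sort (fun k => p k ω) with hσ
      set S : Finset (Fin L) := Finset.univ.filter (fun l => σ l ∈ T) with hS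
      have hjS : j ∈ S := by
        simp only [hS, Finset.mem_filter, Finset.mem_univ, true_and]
        rw [hσj]; exact hiT
      have hSne : S.Nonempty := ⟨j, hjS⟩
      set l₀ := S.min' hSne with hl₀
      have hl₀S : l₀ ∈ S := S.min'_mem hSne
      have hl₀T : σ l₀ ∈ T := by
        have := hl₀S
        simp only [hS, Finset.mem_filter, Finset.mem_univ, true_and] at this
        exact this
      have hl₀j : l₀ ≤ j := S.min'_le j hjS
      have hcardS : S.card = t := by
        have himg : S.image σ = Tfin := by
          ext k
          simp only [Finset.mem_image, hS, Finset.mem_filter, Finset.mem_univ, true_and,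
            hmemT]
          constructor
          · rintro ⟨l, hl, rfl⟩; exact hl
          · intro hk; exact ⟨σ.symm k, by simpa using hk, by simp⟩
        calc S.card = (S.image σ).card :=
              (Finset.card_image_of_injective _ σ.injective).symm
          _ = t := by rw [himg]
      have hsubIci : S ⊆ Finset.Ici l₀ := fun l hl => Finset.mem_Ici.mpr (S.min'_le l hl)
      have hcard : t ≤ L - (l₀ : ℕ) := by
        have h := Finset.card_le_card hsubIci
        rwa [hcardS, Fin.card_Ici] at h
      have h2 : (t : ℝ) ≤ (L : ℝ) - ((l₀ : ℕ) : ℝ) := by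
        have hle : (l₀ : ℕ) ≤ L := l₀.2.le
        have : ((t : ℕ) : ℝ) ≤ ((L - (l₀ : ℕ) : ℕ) : ℝ) := by exact_mod_cast hcard
        rwa [Nat.cast_sub hle] at this
      have hkey : p (σ l₀) ω ≤ α / t := by
        have h1 : p (σ l₀) ω ≤ α / ((L : ℝ) - ((l₀ : ℕ) : ℝ)) := hall l₀ hl₀j
        have h3 : α / ((L : ℝ) - ((l₀ : ℕ) : ℝ)) ≤ α / t :=
          div_le_div_of_nonneg_left hα.1.le htR h2
        exact h1.trans h3
      exact Set.mem_biUnion ((hmemT _).mpr hl₀T) hkey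
    calc μ {ω | ∃ i ∈ T, reject i ω}
        ≤ μ (⋃ i ∈ Tfin, {ω | p i ω ≤ α / t}) := measure_mono hsub
      _ ≤ ∑ i ∈ Tfin, μ {ω | p i ω ≤ α / t} := measure_biUnion_finset_le _ _
      _ ≤ ∑ _i ∈ Tfin, ENNReal.ofReal (α / t) :=
          Finset.sum_le_sum fun i hi => htrue i ((hmemT i).mp hi) _ ⟨hαt0, hαt1⟩
      _ = (t : ENNReal) * ENNReal.ofReal (α / t) := by
          rw [Finset.sum_const, nsmul_eq_mul]
      _ = ENNReal.ofReal α := by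
          rw [← ENNReal.ofReal_natCast, ← ENNReal.ofReal_mul (by positivity)]
          congr 1
          field_simp
end

section
/- Consider a VAR_p(1) process with Σ_ε = σ²I_p and transfer matrix Φ(f) = I_p − Φ₁e^{−i2πf}. Fix distinct j ≠ k. If for every i ∉ {j,k} at least one of the entries (Φ₁)_{ij}, (Φ₁)_{ik} is zero (no joint influence), then the (j,k) entry of S(f)⁻¹ = σ⁻²Φ(f)^HΦ(f) vanishes for all f if and only if (Φ₁)_{jk} = 0 and (Φ₁)_{kj} = 0. -/
open scoped Real

private lemma entry_formula {p : ℕ} (A : Matrix (Fin p) (Fin p) ℝ) (e : ℂ)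
    (he : (starRingEnd ℂ) e * e = 1) (j k : Fin p) (hjk : j ≠ k)
    (hnojoint : ∀ i : Fin p, i ≠ j → i ≠ k → A i j = 0 ∨ A i k = 0) :
    (((1 : Matrix (Fin p) (Fin p) ℂ) - e • A.map (fun x => (x : ℂ))).conjTranspose *
      ((1 : Matrix (Fin p) (Fin p) ℂ) - e • A.map (fun x => (x : ℂ)))) j k
    = -(e * A j k) - (starRingEnd ℂ) e * A k j
        + ((A j j : ℂ) * A j k + (A k j : ℂ) * A k k) := by
  rw [Matrix.mul_apply]
  simp only [Matrix.conjTranspose_apply, Matrix.sub_apply, Matrix.smul_apply,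
    Matrix.one_apply, Matrix.map_apply, smul_eq_mul]
  have hstep : ∀ i : Fin p,
      star ((if i = j then (1:ℂ) else 0) - e * A i j) *
        ((if i = k then (1:ℂ) else 0) - e * A i k)
      = (if i = j then (1:ℂ) else 0) * (if i = k then (1:ℂ) else 0)
        - (if i = j then (1:ℂ) else 0) * (e * A i k)
        - (if i = k then (1:ℂ) else 0) * ((starRingEnd ℂ) e * A i j)
        + (A i j : ℂ) * (A i k : ℂ) := by
    intro i
    have hs : star ((if i = j then (1:ℂ) else 0) - e * A i j)
        = (if i = j then (1:ℂ) else 0) - (starRingEnd ℂ) e * A i j := by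
      simp [star_sub, apply_ite (starRingEnd ℂ), Complex.conj_ofReal]
    rw [hs]
    linear_combination ((A i j : ℂ) * (A i k : ℂ)) * he
  rw [Finset.sum_congr rfl (fun i _ => hstep i)]
  have hsum : (∑ i, (A i j : ℂ) * (A i k : ℂ))
      = (A j j : ℂ) * A j k + (A k j : ℂ) * A k k := by
    rw [← Finset.sum_subset (Finset.subset_univ ({j, k} : Finset (Fin p)))]
    · rw [Finset.sum_pair hjk]
    · intro i _ hi
      simp only [Finset.mem_insert, Finset.mem_singleton, not_or] at hi
      rcases hnojoint i hi.1 hi.2 with h | h <;> simp [h]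
  simp [Finset.sum_add_distrib, Finset.sum_sub_distrib, hsum, ite_mul,
    Finset.sum_ite_eq', hjk, hjk.symm]

/-- For a VAR_p(1) process with `Σ_ε = σ²I` and transfer matrix
`Φ(f) = I − Φ₁ e^{−i2πf}`, fix `j ≠ k`.  If for every `i ∉ {j,k}` at least one
of `(Φ₁)_{ij}, (Φ₁)_{ik}` vanishes (no joint influence), then the `(j,k)` entry
of `S(f)⁻¹ = σ⁻² Φ(f)ᴴ Φ(f)` vanishes for all `f` iff `(Φ₁)_{jk} = 0` and
`(Φ₁)_{kj} = 0`. -/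
theorem var1_no_joint_influence_missing_edge
    (p : ℕ) (Phi1 : Matrix (Fin p) (Fin p) ℝ) (σ : ℝ) (hσ : 0 < σ)
    (j k : Fin p) (hjk : j ≠ k)
    (hnojoint : ∀ i : Fin p, i ≠ j → i ≠ k → Phi1 i j = 0 ∨ Phi1 i k = 0) :
    (∀ f : ℝ,
        (((σ : ℂ) ^ 2)⁻¹ •
            ((((1 : Matrix (Fin p) (Fin p) ℂ)
                  - Complex.exp (-(2 * π * f) * Complex.I) •
                      Phi1.map (fun x => (x : ℂ))).conjTranspose) *
              ((1 : Matrix (Fin p) (Fin p) ℂ)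
                  - Complex.exp (-(2 * π * f) * Complex.I) •
                      Phi1.map (fun x => (x : ℂ))))) j k = 0)
      ↔ (Phi1 j k = 0 ∧ Phi1 k j = 0) := by
  have he : ∀ f : ℝ,
      (starRingEnd ℂ) (Complex.exp (-(2 * π * f) * Complex.I)) *
        Complex.exp (-(2 * π * f) * Complex.I) = 1 := by
    intro f
    rw [← Complex.exp_conj, ← Complex.exp_add, ← Complex.exp_zero]
    congr 1
    simp [Complex.conj_I, map_ofNat]
  have hσ' : (((σ : ℂ) ^ 2)⁻¹) ≠ 0 := by
    simp [hσ.ne']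
  constructor
  · intro h
    have key : ∀ f : ℝ,
        -(Complex.exp (-(2 * π * f) * Complex.I) * (Phi1 j k : ℂ))
          - (starRingEnd ℂ) (Complex.exp (-(2 * π * f) * Complex.I)) * (Phi1 k j : ℂ)
          + ((Phi1 j j : ℂ) * Phi1 j k + (Phi1 k j : ℂ) * Phi1 k k) = 0 := by
      intro f
      have h1 := h f
      rw [Matrix.smul_apply, smul_eq_zero] at h1
      rcases h1 with h1 | h1
      · exact absurd h1 hσ'
      · rw [entry_formula Phi1 _ (he f) j k hjk hnojoint] at h1
        exact h1
    have E0 := key 0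
    have E2 := key (1/2)
    have E3 := key (1/4)
    have e0 : Complex.exp (-(2 * (π:ℝ) * ((0:ℝ):ℝ)) * Complex.I) = 1 := by
      norm_num
    have e2 : Complex.exp (-(2 * (π:ℝ) * (((1:ℝ)/2 : ℝ):ℝ)) * Complex.I) = -1 := by
      have : (-(2 * ((π:ℝ):ℂ) * (((1:ℝ)/2 : ℝ):ℂ)) * Complex.I) = -((π:ℂ) * Complex.I) := by
        push_cast; ring
      rw [this, Complex.exp_neg, Complex.exp_pi_mul_I]
      norm_num
    have e3 : Complex.exp (-(2 * (π:ℝ) * (((1:ℝ)/4 : ℝ):ℝ)) * Complex.I) = -Complex.I := by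
      have : (-(2 * ((π:ℝ):ℂ) * (((1:ℝ)/4 : ℝ):ℂ)) * Complex.I)
          = -((π/2 : ℂ) * Complex.I) := by push_cast; ring
      rw [this, Complex.exp_neg]
      have : Complex.exp ((π/2 : ℂ) * Complex.I) = Complex.I := by
        rw [Complex.exp_mul_I]
        simp [Complex.cos_pi_div_two, Complex.sin_pi_div_two]
      rw [this, Complex.inv_I]
    rw [e0, map_one] at E0
    rw [e2] at E2
    rw [e3] at E3
    rw [map_neg, Complex.conj_I] at E3
    rw [show (starRingEnd ℂ) (-1 : ℂ) = -1 by simp] at E2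
    have hx : (Phi1 j k : ℂ) = 0 := by
      linear_combination ((Complex.I - 1)/4) * E0 + ((Complex.I + 1)/4) * E2
        + (-Complex.I/2) * E3 + (((Phi1 j k : ℂ) - (Phi1 k j : ℂ))/2) * Complex.I_sq
    have hy : (Phi1 k j : ℂ) = 0 := by
      linear_combination ((-Complex.I - 1)/4) * E0 + ((1 - Complex.I)/4) * E2
        + (Complex.I/2) * E3 + (((Phi1 k j : ℂ) - (Phi1 j k : ℂ))/2) * Complex.I_sq
    exact ⟨by exact_mod_cast hx, by exact_mod_cast hy⟩
  · rintro ⟨h1, h2⟩ f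
    rw [Matrix.smul_apply, entry_formula Phi1 _ (he f) j k hjk hnojoint, h1, h2]
    simp
end
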